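/- arXiv:1610.05827 — 2 statements merged into one kernel-verified Lean document; each statement's English description precedes it below -/
import Mathlib

section
/- Let (λ_k)_{k∈ℕ} be a sequence of positive reals with λ_k → λ > 0 and let b > 0. Then lim_{n→∞} (∑_{k=0}^n C(n,k) λ_k^k b^{n-k})^{1/n} = λ + b. -/
/-!
Eventual two-sided control `m ≤ λ_k ≤ M` upgrades, at the price of a constant factor, to
`m^k ≤ C λ_k^k` and `λ_k^k ≤ C M^k` for every `k`, hence to `(m + b)^n ≤ C S_n` and
`S_n ≤ C (M + b)^n` by the binomial theorem. The constant disappears under the `n`-th root,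
and `m, M` can be taken arbitrarily close to `λ`.
-/

open Filter Finset Topology

noncomputable def perturbedBinomialSum (x : ℕ → ℝ) (b : ℝ) (n : ℕ) : ℝ :=
  ∑ k ∈ range (n + 1), (n.choose k : ℝ) * x k ^ k * b ^ (n - k)

theorem perturbedBinomialSum_const (a b : ℝ) (n : ℕ) :
    perturbedBinomialSum (fun _ => a) b n = (a + b) ^ n := by
  rw [perturbedBinomialSum, add_pow]
  exact sum_congr rfl fun k _ => by ring

theorem perturbedBinomialSum_nonneg {x : ℕ → ℝ} (hx : ∀ k, 0 ≤ x k) {b : ℝ} (hb : 0 ≤ b)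
    (n : ℕ) : 0 ≤ perturbedBinomialSum x b n :=
  sum_nonneg fun k _ => by have := hx k; positivity

theorem perturbedBinomialSum_le_mul {x y : ℕ → ℝ} {b C : ℝ} (hb : 0 ≤ b)
    (hxy : ∀ k, x k ^ k ≤ C * y k ^ k) (n : ℕ) :
    perturbedBinomialSum x b n ≤ C * perturbedBinomialSum y b n := by
  rw [perturbedBinomialSum, perturbedBinomialSum, mul_sum]
  refine sum_le_sum fun k _ => ?_
  calc (n.choose k : ℝ) * x k ^ k * b ^ (n - k)
      ≤ (n.choose k : ℝ) * (C * y k ^ k) * b ^ (n - k) := by gcongr; exact hxy k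
    _ = C * ((n.choose k : ℝ) * y k ^ k * b ^ (n - k)) := by ring

theorem exists_pow_le_mul_pow_of_eventually_le {x y : ℕ → ℝ} (hx : ∀ k, 0 ≤ x k)
    (hy : ∀ k, 0 < y k) (hxy : ∀ᶠ k in atTop, x k ≤ y k) :
    ∃ C, 0 < C ∧ ∀ k, x k ^ k ≤ C * y k ^ k := by
  have hratio : ∀ᶠ k in atTop, (x k / y k) ^ k ≤ 1 := hxy.mono fun k hk =>
    pow_le_one₀ (div_nonneg (hx k) (hy k).le) ((div_le_one (hy k)).2 hk)
  obtain ⟨C, hC⟩ := (isBoundedUnder_of_eventually_le hratio).bddAbove_range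
  have hbound : ∀ k, (x k / y k) ^ k ≤ C := fun k => hC ⟨k, rfl⟩
  -- `C ≥ (x 0 / y 0) ^ 0 = 1`
  refine ⟨C, one_pos.trans_le (by simpa using hbound 0), fun k => ?_⟩
  have hk := hbound k
  rwa [div_pow, div_le_iff₀ (pow_pos (hy k) k)] at hk

theorem tendsto_const_rpow_one_div_natCast {C : ℝ} (hC : 0 < C) :
    Tendsto (fun n : ℕ => C ^ (1 / (n : ℝ))) atTop (𝓝 1) := by
  have := (Real.continuousAt_const_rpow hC.ne').tendsto.comp tendsto_one_div_atTop_nhds_zero_nat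
  rwa [Real.rpow_zero] at this

theorem tendsto_rpow_one_div_of_pow_bounds {u : ℕ → ℝ} {L : ℝ} (hu : ∀ n, 0 ≤ u n)
    (hL : 0 < L) (hlow : ∀ c, 0 < c → c < L → ∃ C, 0 < C ∧ ∀ n, c ^ n ≤ C * u n)
    (hup : ∀ c, L < c → ∃ C, 0 < C ∧ ∀ n, u n ≤ C * c ^ n) :
    Tendsto (fun n : ℕ => u n ^ (1 / (n : ℝ))) atTop (𝓝 L) := by
  have root_pow {c : ℝ} (hc : 0 ≤ c) {n : ℕ} (hn : n ≠ 0) : (c ^ n) ^ (1 / (n : ℝ)) = c := by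
    rw [one_div, Real.pow_rpow_inv_natCast hc hn]
  refine tendsto_order.2 ⟨fun a ha => ?_, fun a ha => ?_⟩
  · set c := (max a 0 + L) / 2 with hc
    have hc0 : 0 < c := by positivity
    have hac : a < c := by have := le_max_left a 0; linarith [hc]
    obtain ⟨C, hC, hbound⟩ := hlow c hc0 (by have := max_lt ha hL; linarith [hc])
    have hlim : Tendsto (fun n : ℕ => c / C ^ (1 / (n : ℝ))) atTop (𝓝 c) := by
      have := (tendsto_const_nhds (x := c)).div (tendsto_const_rpow_one_div_natCast hC) one_ne_zero
      rwa [div_one] at this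
    filter_upwards [hlim.eventually (lt_mem_nhds hac), eventually_ne_atTop 0] with n hlt hn
    refine hlt.trans_le ?_
    rw [div_le_iff₀ (by positivity), mul_comm, ← Real.mul_rpow hC.le (hu n)]
    calc c = (c ^ n) ^ (1 / (n : ℝ)) := (root_pow hc0.le hn).symm
      _ ≤ (C * u n) ^ (1 / (n : ℝ)) := by gcongr; exact hbound n
  · set c := (L + a) / 2 with hc
    have hc0 : 0 < c := by linarith [hc]
    obtain ⟨C, hC, hbound⟩ := hup c (by linarith [hc])
    have hlim : Tendsto (fun n : ℕ => C ^ (1 / (n : ℝ)) * c) atTop (𝓝 c) := by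
      simpa using (tendsto_const_rpow_one_div_natCast hC).mul_const c
    have hca : c < a := by linarith [hc]
    filter_upwards [hlim.eventually (gt_mem_nhds hca), eventually_ne_atTop 0] with n hlt hn
    calc u n ^ (1 / (n : ℝ)) ≤ (C * c ^ n) ^ (1 / (n : ℝ)) := by gcongr; exacts [hu n, hbound n]
      _ = C ^ (1 / (n : ℝ)) * c := by rw [Real.mul_rpow hC.le (by positivity), root_pow hc0.le hn]
      _ < a := hlt

/-- If `λ_k → λ > 0` and `b > 0`, then
`(∑_{k=0}^n C(n,k) λ_k^k b^{n-k})^{1/n} → λ + b`. -/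
theorem perturbed_binomial_limit (lam : ℕ → ℝ) (l b : ℝ)
    (hpos : ∀ k, 0 < lam k) (hl : 0 < l) (hb : 0 < b)
    (hlim : Tendsto lam atTop (nhds l)) :
    Tendsto (fun n : ℕ =>
        (∑ k ∈ range (n + 1), (n.choose k : ℝ) * lam k ^ k * b ^ (n - k)) ^ (1 / (n : ℝ)))
      atTop (nhds (l + b)) := by
  refine tendsto_rpow_one_div_of_pow_bounds
    (perturbedBinomialSum_nonneg (fun k => (hpos k).le) hb.le) (by positivity) ?_ ?_
  · intro c hc0 hc
    set m := max (c - b) 0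
    have hml : m < l := max_lt (by linarith) hl
    obtain ⟨C, hC, hbound⟩ := exists_pow_le_mul_pow_of_eventually_le (fun _ => le_max_right _ 0)
      hpos (hlim.eventually (eventually_ge_nhds hml))
    refine ⟨C, hC, fun n => ?_⟩
    calc c ^ n ≤ (m + b) ^ n := by gcongr; have := le_max_left (c - b) 0; linarith
      _ = perturbedBinomialSum (fun _ => m) b n := (perturbedBinomialSum_const m b n).symm
      _ ≤ C * perturbedBinomialSum lam b n := perturbedBinomialSum_le_mul hb.le hbound n
  · intro c hc
    obtain ⟨C, hC, hbound⟩ := exists_pow_le_mul_pow_of_eventually_le (fun k => (hpos k).le)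
      (fun _ => by linarith) (hlim.eventually (eventually_le_nhds (by linarith : l < c - b)))
    refine ⟨C, hC, fun n => ?_⟩
    calc perturbedBinomialSum lam b n ≤ C * perturbedBinomialSum (fun _ => c - b) b n :=
          perturbedBinomialSum_le_mul hb.le hbound n
      _ = C * c ^ n := by rw [perturbedBinomialSum_const, sub_add_cancel]
end

section
/- Suppose d : ℕ → ℝ and (a_i) are sequences with constants C₀, C₁, C₂ > 0 and lengths l_i ≥ 0 such that 2·log⁺(a_i) + C₁ ≤ l_i for all i and ∑_{i=1}^n l_i ≤ d(n) ≤ ∑_{i=1}^n l_i + C₀ for all n. If d(n) → ∞, then limsup_{n→∞} [2∑_{i=1}^n log⁺(a_i)] / d(n) ≤ 1. -/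
/-
Termwise `2 log⁺ aᵢ ≤ lᵢ`, so `2 ∑ log⁺ aᵢ ≤ ∑ lᵢ ≤ d n`: the ratio is eventually in `[0, 1]`
once `d n > 0`, which holds eventually because `d n → ∞`.
-/

open Filter Finset

noncomputable def logPlus (x : ℝ) : ℝ := max (Real.log x) 0

lemma logPlus_nonneg (x : ℝ) : 0 ≤ logPlus x := le_max_right _ _

lemma Filter.limsup_div_le_one_of_eventually_le {ι : Type*} {l : Filter ι} [l.NeBot]
    {f g : ι → ℝ} (hf : ∀ᶠ i in l, 0 ≤ f i) (hfg : ∀ᶠ i in l, f i ≤ g i)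
    (hg : ∀ᶠ i in l, 0 < g i) :
    limsup (fun i => f i / g i) l ≤ 1 := by
  have hratio_nonneg : ∀ᶠ i in l, 0 ≤ f i / g i := by
    filter_upwards [hf, hg] with i hfi hgi
    exact div_nonneg hfi hgi.le
  refine limsup_le_of_le (isCoboundedUnder_le_of_eventually_le l hratio_nonneg) ?_
  filter_upwards [hfg, hg] with i hfgi hgi
  exact div_le_one_of_le₀ hfgi hgi.le

theorem mean_cusp_winding_le_one_general (d : ℕ → ℝ) (a l : ℕ → ℝ)
    (C₀ C₁ : ℝ) (hC₁ : 0 < C₁)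
    (hlb : ∀ i, 2 * logPlus (a i) + C₁ ≤ l i)
    (hd : ∀ n, (∑ i ∈ Icc 1 n, l i) ≤ d n ∧ d n ≤ (∑ i ∈ Icc 1 n, l i) + C₀)
    (hdiv : Tendsto d atTop atTop) :
    limsup (fun n : ℕ => (2 * ∑ i ∈ Icc 1 n, logPlus (a i)) / d n) atTop ≤ 1 := by
  have hsum_le : ∀ n, 2 * ∑ i ∈ Icc 1 n, logPlus (a i) ≤ d n := fun n =>
    calc 2 * ∑ i ∈ Icc 1 n, logPlus (a i)
        = ∑ i ∈ Icc 1 n, 2 * logPlus (a i) := mul_sum _ _ _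
      _ ≤ ∑ i ∈ Icc 1 n, l i := sum_le_sum fun i _ => by linarith [hlb i]
      _ ≤ d n := (hd n).1
  have hsum_nonneg : ∀ n, 0 ≤ 2 * ∑ i ∈ Icc 1 n, logPlus (a i) := fun n =>
    mul_nonneg zero_le_two (sum_nonneg fun i _ => logPlus_nonneg (a i))
  exact limsup_div_le_one_of_eventually_le (.of_forall hsum_nonneg) (.of_forall hsum_le)
    (hdiv.eventually_gt_atTop 0)

/-- If `2 log⁺ a_i + C₁ ≤ l_i` and `∑_{i=1}^n l_i ≤ d n ≤ ∑_{i=1}^n l_i + C₀` with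
`d n → ∞`, then `limsup_n (2 ∑_{i=1}^n log⁺ a_i) / d n ≤ 1`. -/
theorem mean_cusp_winding_le_one (d : ℕ → ℝ) (a l : ℕ → ℝ)
    (C₀ C₁ C₂ : ℝ) (hC₀ : 0 < C₀) (hC₁ : 0 < C₁) (hC₂ : 0 < C₂)
    (hl : ∀ i, 0 ≤ l i)
    (hlb : ∀ i, 2 * logPlus (a i) + C₁ ≤ l i)
    (hd : ∀ n, (∑ i ∈ Icc 1 n, l i) ≤ d n ∧ d n ≤ (∑ i ∈ Icc 1 n, l i) + C₀)
    (hdiv : Tendsto d atTop atTop) :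
    limsup (fun n : ℕ => (2 * ∑ i ∈ Icc 1 n, logPlus (a i)) / d n) atTop ≤ 1 :=
  mean_cusp_winding_le_one_general d a l C₀ C₁ hC₁ hlb hd hdiv
end
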